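/- Let A > 0, T > 0 and let q, ψ₁ be continuous functions with |q(y)| ≤ A for y ∈ [0,T] and |ψ₁(y,t)| ≤ A on the triangle Δ_T. Suppose continuous functions ψ̃₁, ψ̃₂ on Δ_T and q̃ on [0,T] satisfy the integral inequalities |ψ̃₁(y,t)| ≤ ∫₀^y |ψ̃₂(η, t+η-y)| dη, |ψ̃₂(y,t)| ≤ 2A∫₀^y |ψ̃₁(η, t-η+y)| dη + A∫₀^y |q̃(η)| dη + ε, and |q̃(y)| ≤ 4A∫₀^y |q̃(η)| dη + 2A∫₀^y |ψ̃₁(η, 2y-η)| dη + 2ε for some ε > 0. Then with C = 6A·max(1, 2T), the bounds ‖q̃‖_∞ ≤ 6e^{CT}ε, ‖ψ̃₂‖_∞ ≤ 6e^{CT}ε, and ‖ψ̃₁‖_∞ ≤ 6T·e^{CT}ε hold. -/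

import Mathlib

open Set MeasureTheory intervalIntegral

/-!
Dominate `|q̃ y|` and `2 |ψ̃₂ (y, t)|` simultaneously by one function `g y` of the height alone.
Integrating `ψ̃₂` along the characteristic gives `|ψ̃₁ (y, t)| ≤ ½ ∫₀^y g`, and feeding this into
the other two inequalities shows that `2ε + C ∫₀^y g` dominates them again, because
`C = 6A · max 1 (2T) ≥ A (4 + 2T)`. Starting from a constant bound `M`, the Picard iterates
`2ε ∑_{k<n} (Cy)^k/k! + M (Cy)^n/n!` all dominate and tend to `2ε e^{Cy}`. This bounds `q̃` and
`ψ̃₂`, and then `ψ̃₁` once more through its characteristic inequality.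
-/

section PicardIterate

variable (a C M : ℝ)

noncomputable def picardIterate (n : ℕ) (y : ℝ) : ℝ :=
  a * ∑ k ∈ Finset.range n, (C * y) ^ k / k.factorial + M * ((C * y) ^ n / n.factorial)

theorem continuous_picardIterate (n : ℕ) : Continuous (picardIterate a C M n) := by
  unfold picardIterate; fun_prop

theorem picardIterate_zero : picardIterate a C M 0 = fun _ ↦ M := by
  ext; simp [picardIterate]

variable {a C M}

theorem picardIterate_nonneg (ha : 0 ≤ a) (hC : 0 ≤ C) (hM : 0 ≤ M) (n : ℕ) {y : ℝ}
    (hy : 0 ≤ y) : 0 ≤ picardIterate a C M n y := by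
  have := mul_nonneg hC hy
  unfold picardIterate; positivity

theorem mul_integral_pow_div_factorial (C y : ℝ) (k : ℕ) :
    C * ∫ ξ in (0:ℝ)..y, (C * ξ) ^ k / k.factorial = (C * y) ^ (k + 1) / (k + 1).factorial := by
  simp_rw [mul_pow, mul_div_right_comm _ (_ ^ k), intervalIntegral.integral_const_mul, integral_pow,
    Nat.factorial_succ]
  push_cast
  field_simp
  ring

variable (a C M) in
theorem picardIterate_succ (n : ℕ) (y : ℝ) :
    picardIterate a C M (n + 1) y = a + C * ∫ ξ in (0:ℝ)..y, picardIterate a C M n ξ := by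
  have hint : ∀ k : ℕ, IntervalIntegrable (fun ξ : ℝ ↦ (C * ξ) ^ k / k.factorial) volume 0 y :=
    fun k ↦ (by fun_prop : Continuous fun ξ : ℝ ↦ (C * ξ) ^ k / k.factorial).intervalIntegrable _ _
  unfold picardIterate
  rw [intervalIntegral.integral_add ((by fun_prop : Continuous _).intervalIntegrable _ _)
      ((hint n).const_mul M), intervalIntegral.integral_const_mul,
    intervalIntegral.integral_const_mul, integral_finsetSum fun k _ ↦ hint k,
    Finset.sum_range_succ']
  simp only [mul_add, Finset.mul_sum, mul_left_comm C, mul_integral_pow_div_factorial, pow_zero,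
    Nat.factorial_zero, Nat.cast_one, div_one, mul_one]
  ring

theorem picardIterate_le_add (ha : 0 ≤ a) (hC : 0 ≤ C) (n : ℕ) {y : ℝ} (hy : 0 ≤ y) :
    picardIterate a C M n y ≤ a * Real.exp (C * y) + M * ((C * y) ^ n / n.factorial) := by
  unfold picardIterate
  gcongr
  exact Real.sum_le_exp_of_nonneg (mul_nonneg hC hy) n

end PicardIterate

theorem le_mul_exp_of_le_add_mul_integral {α : Type*} {u π : α → ℝ} {a C : ℝ} (ha : 0 ≤ a)
    (hC : 0 ≤ C) (hπ : ∀ s, 0 ≤ π s) (hu : BddAbove (range u))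
    (hstep : ∀ g : ℝ → ℝ, Continuous g → (∀ y, 0 ≤ y → 0 ≤ g y) → (∀ s, u s ≤ g (π s)) →
      ∀ s, u s ≤ a + C * ∫ η in (0:ℝ)..π s, g η)
    (s : α) : u s ≤ a * Real.exp (C * π s) := by
  obtain ⟨M, hM⟩ := hu
  have hiter : ∀ n s, u s ≤ picardIterate a C (max M 0) n (π s) := by
    intro n
    induction n with
    | zero => simpa [picardIterate_zero] using fun s ↦ le_max_of_le_left (hM ⟨s, rfl⟩)
    | succ n ih =>
      simp only [picardIterate_succ]
      exact hstep _ (continuous_picardIterate ..)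
        (fun y hy ↦ picardIterate_nonneg ha hC (le_max_right _ _) n hy) ih
  have hlim : Filter.Tendsto (fun n : ℕ ↦ a * Real.exp (C * π s) +
      max M 0 * ((C * π s) ^ n / n.factorial)) Filter.atTop (nhds (a * Real.exp (C * π s))) := by
    simpa using ((FloorSemiring.tendsto_pow_div_factorial_atTop (C * π s)).const_mul _).const_add _
  exact ge_of_tendsto' hlim fun n ↦ (hiter n s).trans (picardIterate_le_add ha hC n (hπ s))

def triangle (T : ℝ) : Set (ℝ × ℝ) := {p | 0 ≤ p.1 ∧ p.1 ≤ p.2 ∧ p.2 ≤ 2 * T - p.1}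

section Triangle

variable {T η y : ℝ} {p : ℝ × ℝ}

theorem isCompact_triangle (T : ℝ) : IsCompact (triangle T) := by
  refine ((isCompact_Icc (a := 0) (b := T)).prod
    (isCompact_Icc (a := 0) (b := 2 * T))).of_isClosed_subset ?_ ?_
  · exact (isClosed_le continuous_const continuous_fst).inter
      ((isClosed_le continuous_fst continuous_snd).inter
        (isClosed_le continuous_snd (continuous_const.sub continuous_fst)))
  · rintro p ⟨h₀, h₁, h₂⟩
    exact ⟨⟨h₀, by linarith⟩, by linarith, by linarith⟩

theorem fst_mem_Icc_of_mem_triangle (hp : p ∈ triangle T) : p.1 ∈ Icc 0 T :=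
  ⟨hp.1, by linarith [hp.2.1, hp.2.2]⟩

theorem mk_add_sub_mem_triangle (hp : p ∈ triangle T) (hη : η ∈ Icc 0 p.1) :
    (η, p.2 + η - p.1) ∈ triangle T := by
  obtain ⟨h₀, h₁, h₂⟩ := hp
  exact ⟨hη.1, by linarith [hη.2], by linarith [hη.1, hη.2]⟩

theorem mk_sub_add_mem_triangle (hp : p ∈ triangle T) (hη : η ∈ Icc 0 p.1) :
    (η, p.2 - η + p.1) ∈ triangle T := by
  obtain ⟨h₀, h₁, h₂⟩ := hp
  exact ⟨hη.1, by linarith [hη.2], by linarith [hη.1, hη.2]⟩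

theorem mk_two_mul_sub_mem_triangle (hy : y ∈ Icc 0 T) (hη : η ∈ Icc 0 y) :
    (η, 2 * y - η) ∈ triangle T :=
  ⟨hη.1, by linarith [hη.2], by linarith [hy.2]⟩

end Triangle

theorem integral_abs_le_mul {f : ℝ → ℝ} {y B : ℝ} (hy : 0 ≤ y) (h : ∀ η ∈ Ioc 0 y, |f η| ≤ B) :
    ∫ η in (0:ℝ)..y, |f η| ≤ B * y := by
  have := norm_integral_le_of_norm_le_const (f := fun η ↦ |f η|) (a := 0) (b := y)
    (by simpa [uIoc_of_le hy] using h)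
  simpa [abs_of_nonneg hy] using (le_abs_self _).trans this

section System

variable {A T ε C y : ℝ} {p : ℝ × ℝ} {ψ₁ ψ₂ : ℝ → ℝ → ℝ} {q g : ℝ → ℝ}

theorem abs_le_half_integral_of_dominated (hψ₂ : Continuous fun p : ℝ × ℝ ↦ ψ₂ p.1 p.2)
    (h₁ : ∀ p ∈ triangle T, |ψ₁ p.1 p.2| ≤ ∫ η in (0:ℝ)..p.1, |ψ₂ η (p.2 + η - p.1)|)
    (hg : Continuous g) (hψ₂g : ∀ p ∈ triangle T, 2 * |ψ₂ p.1 p.2| ≤ g p.1)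
    (hp : p ∈ triangle T) : |ψ₁ p.1 p.2| ≤ (∫ η in (0:ℝ)..p.1, g η) / 2 := by
  calc |ψ₁ p.1 p.2| ≤ ∫ η in (0:ℝ)..p.1, |ψ₂ η (p.2 + η - p.1)| := h₁ p hp
    _ ≤ ∫ η in (0:ℝ)..p.1, g η / 2 := by
        refine integral_mono_on hp.1 ((by fun_prop : Continuous _).intervalIntegrable _ _)
          ((hg.div_const 2).intervalIntegrable _ _) fun η hη ↦ ?_
        linarith [hψ₂g _ (mk_add_sub_mem_triangle hp hη)]
    _ = (∫ η in (0:ℝ)..p.1, g η) / 2 := intervalIntegral.integral_div 2 _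

theorem integral_abs_le_half_integral_mul
    (hψ₁ : ∀ p ∈ triangle T, |ψ₁ p.1 p.2| ≤ (∫ η in (0:ℝ)..p.1, g η) / 2)
    (hg : Continuous g) (hg₀ : ∀ y, 0 ≤ y → 0 ≤ g y) (hy : 0 ≤ y) {τ : ℝ → ℝ}
    (hτ : ∀ η ∈ Icc 0 y, (η, τ η) ∈ triangle T) :
    ∫ η in (0:ℝ)..y, |ψ₁ η (τ η)| ≤ (∫ η in (0:ℝ)..y, g η) / 2 * y := by
  refine integral_abs_le_mul hy fun η hη ↦ (hψ₁ _ (hτ η (Ioc_subset_Icc_self hη))).trans ?_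
  gcongr
  exact integral_mono_interval le_rfl hη.1.le hη.2
    (ae_restrict_of_forall_mem measurableSet_Ioc fun x hx ↦ hg₀ x hx.1.le)
    (hg.intervalIntegrable _ _)

theorem abs_le_add_mul_integral_of_ineq₃ (hA : 0 ≤ A) (hC : A * (4 + 2 * T) ≤ C)
    (hq : Continuous q) (hg : Continuous g) (hg₀ : ∀ y, 0 ≤ y → 0 ≤ g y)
    (hqg : ∀ y ∈ Icc 0 T, |q y| ≤ g y)
    (hψ₁ : ∀ p ∈ triangle T, |ψ₁ p.1 p.2| ≤ (∫ η in (0:ℝ)..p.1, g η) / 2)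
    (h₃ : ∀ y ∈ Icc (0:ℝ) T, |q y| ≤
      4 * A * (∫ η in (0:ℝ)..y, |q η|) + 2 * A * (∫ η in (0:ℝ)..y, |ψ₁ η (2 * y - η)|) + 2 * ε)
    (hy : y ∈ Icc 0 T) : |q y| ≤ 2 * ε + C * ∫ η in (0:ℝ)..y, g η := by
  set G := ∫ η in (0:ℝ)..y, g η
  have hG : 0 ≤ G := integral_nonneg hy.1 fun η hη ↦ hg₀ η hη.1
  have hqG : ∫ η in (0:ℝ)..y, |q η| ≤ G :=
    integral_mono_on hy.1 (hq.abs.intervalIntegrable _ _) (hg.intervalIntegrable _ _)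
      fun η hη ↦ hqg η ⟨hη.1, hη.2.trans hy.2⟩
  have hψ₁G := integral_abs_le_half_integral_mul hψ₁ hg hg₀ hy.1
    fun η hη ↦ mk_two_mul_sub_mem_triangle hy hη
  calc |q y| ≤ 4 * A * G + 2 * A * (G / 2 * y) + 2 * ε := by
        grw [h₃ y hy, hqG, hψ₁G]
    _ ≤ 2 * ε + C * G := by
        nlinarith [mul_le_mul_of_nonneg_right hC hG,
          mul_nonneg (mul_nonneg hA hG) (by linarith [hy.1, hy.2] : 0 ≤ 2 * T - y)]

theorem two_mul_abs_le_add_mul_integral_of_ineq₂ (hA : 0 ≤ A) (hC : A * (4 + 2 * T) ≤ C)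
    (hq : Continuous q) (hg : Continuous g) (hg₀ : ∀ y, 0 ≤ y → 0 ≤ g y)
    (hqg : ∀ y ∈ Icc 0 T, |q y| ≤ g y)
    (hψ₁ : ∀ p ∈ triangle T, |ψ₁ p.1 p.2| ≤ (∫ η in (0:ℝ)..p.1, g η) / 2)
    (h₂ : ∀ p ∈ triangle T, |ψ₂ p.1 p.2| ≤ 2 * A * (∫ η in (0:ℝ)..p.1, |ψ₁ η (p.2 - η + p.1)|)
      + A * (∫ η in (0:ℝ)..p.1, |q η|) + ε)
    (hp : p ∈ triangle T) : 2 * |ψ₂ p.1 p.2| ≤ 2 * ε + C * ∫ η in (0:ℝ)..p.1, g η := by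
  have hy := fst_mem_Icc_of_mem_triangle hp
  set G := ∫ η in (0:ℝ)..p.1, g η
  have hG : 0 ≤ G := integral_nonneg hy.1 fun η hη ↦ hg₀ η hη.1
  have hqG : ∫ η in (0:ℝ)..p.1, |q η| ≤ G :=
    integral_mono_on hy.1 (hq.abs.intervalIntegrable _ _) (hg.intervalIntegrable _ _)
      fun η hη ↦ hqg η ⟨hη.1, hη.2.trans hy.2⟩
  have hψ₁G := integral_abs_le_half_integral_mul hψ₁ hg hg₀ hy.1
    fun η hη ↦ mk_sub_add_mem_triangle hp hη
  calc 2 * |ψ₂ p.1 p.2| ≤ 2 * (2 * A * (G / 2 * p.1) + A * G + ε) := by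
        grw [h₂ p hp, hqG, hψ₁G]
    _ ≤ 2 * ε + C * G := by
        nlinarith [mul_le_mul_of_nonneg_right hC hG,
          mul_nonneg (mul_nonneg hA hG) (by linarith [hy.1, hy.2] : 0 ≤ T - p.1)]

theorem abs_le_mul_exp_of_ineq (hA : 0 ≤ A) (hε : 0 ≤ ε) (hC₀ : 0 ≤ C) (hC : A * (4 + 2 * T) ≤ C)
    (hψ₂ : Continuous fun p : ℝ × ℝ ↦ ψ₂ p.1 p.2) (hq : Continuous q)
    (h₁ : ∀ p ∈ triangle T, |ψ₁ p.1 p.2| ≤ ∫ η in (0:ℝ)..p.1, |ψ₂ η (p.2 + η - p.1)|)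
    (h₂ : ∀ p ∈ triangle T, |ψ₂ p.1 p.2| ≤ 2 * A * (∫ η in (0:ℝ)..p.1, |ψ₁ η (p.2 - η + p.1)|)
      + A * (∫ η in (0:ℝ)..p.1, |q η|) + ε)
    (h₃ : ∀ y ∈ Icc (0:ℝ) T, |q y| ≤
      4 * A * (∫ η in (0:ℝ)..y, |q η|) + 2 * A * (∫ η in (0:ℝ)..y, |ψ₁ η (2 * y - η)|) + 2 * ε) :
    (∀ y ∈ Icc 0 T, |q y| ≤ 2 * ε * Real.exp (C * y)) ∧
      ∀ p ∈ triangle T, 2 * |ψ₂ p.1 p.2| ≤ 2 * ε * Real.exp (C * p.1) := by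
  -- `|q|` on `[0, T]` and `2 |ψ₂|` on the triangle as one family, indexed by the height `π`.
  let u : Icc (0:ℝ) T ⊕ triangle T → ℝ := Sum.elim (fun y ↦ |q y|) fun p ↦ 2 * |ψ₂ p.1.1 p.1.2|
  let π : Icc (0:ℝ) T ⊕ triangle T → ℝ := Sum.elim Subtype.val fun p ↦ p.1.1
  have hu : ∀ s, u s ≤ 2 * ε * Real.exp (C * π s) := by
    refine le_mul_exp_of_le_add_mul_integral (by positivity) hC₀ ?_ ?_ ?_
    · rintro (y | p)
      exacts [y.2.1, p.2.1]
    · have : CompactSpace (triangle T) := isCompact_iff_compactSpace.mp (isCompact_triangle T)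
      exact (isCompact_range (by fun_prop)).bddAbove
    · intro g hg hg₀ hug
      have hqg : ∀ y ∈ Icc 0 T, |q y| ≤ g y := fun y hy ↦ hug (.inl ⟨y, hy⟩)
      have hψ₂g : ∀ p ∈ triangle T, 2 * |ψ₂ p.1 p.2| ≤ g p.1 := fun p hp ↦ hug (.inr ⟨p, hp⟩)
      have hψ₁ := fun p (hp : p ∈ triangle T) ↦
        abs_le_half_integral_of_dominated hψ₂ h₁ hg hψ₂g hp
      rintro (⟨y, hy⟩ | ⟨p, hp⟩)
      · exact abs_le_add_mul_integral_of_ineq₃ hA hC hq hg hg₀ hqg hψ₁ h₃ hy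
      · exact two_mul_abs_le_add_mul_integral_of_ineq₂ hA hC hq hg hg₀ hqg hψ₁ h₂ hp
  exact ⟨fun y hy ↦ hu (.inl ⟨y, hy⟩), fun p hp ↦ hu (.inr ⟨p, hp⟩)⟩

end System

theorem stmt1_general
    (A T ε : ℝ) (hA : 0 < A) (hε : 0 < ε)
    (Δ : Set (ℝ × ℝ)) (hΔ : Δ = {p : ℝ × ℝ | 0 ≤ p.1 ∧ p.1 ≤ p.2 ∧ p.2 ≤ 2 * T - p.1})
    (ψt₁ ψt₂ : ℝ → ℝ → ℝ) (qt : ℝ → ℝ)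
    (hψt₂ : Continuous fun p : ℝ × ℝ => ψt₂ p.1 p.2)
    (hqt : Continuous qt)
    (hineq₁ : ∀ p ∈ Δ, |ψt₁ p.1 p.2| ≤ ∫ η in (0:ℝ)..p.1, |ψt₂ η (p.2 + η - p.1)|)
    (hineq₂ : ∀ p ∈ Δ, |ψt₂ p.1 p.2| ≤
      2 * A * (∫ η in (0:ℝ)..p.1, |ψt₁ η (p.2 - η + p.1)|)
        + A * (∫ η in (0:ℝ)..p.1, |qt η|) + ε)
    (hineq₃ : ∀ y ∈ Icc (0:ℝ) T, |qt y| ≤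
      4 * A * (∫ η in (0:ℝ)..y, |qt η|)
        + 2 * A * (∫ η in (0:ℝ)..y, |ψt₁ η (2 * y - η)|) + 2 * ε) :
    (∀ y ∈ Icc (0:ℝ) T, |qt y| ≤ 6 * Real.exp (6 * A * max 1 (2 * T) * T) * ε) ∧
    (∀ p ∈ Δ, |ψt₂ p.1 p.2| ≤ 6 * Real.exp (6 * A * max 1 (2 * T) * T) * ε) ∧
    (∀ p ∈ Δ, |ψt₁ p.1 p.2| ≤ 6 * T * Real.exp (6 * A * max 1 (2 * T) * T) * ε) := by
  subst hΔ
  set C := 6 * A * max 1 (2 * T)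
  have hC₀ : 0 ≤ C := by positivity
  have hC : A * (4 + 2 * T) ≤ C := by nlinarith [le_max_left 1 (2 * T), le_max_right 1 (2 * T)]
  obtain ⟨hq, hψ₂⟩ := abs_le_mul_exp_of_ineq hA.le hε.le hC₀ hC hψt₂ hqt hineq₁ hineq₂ hineq₃
  have hexp : ∀ y ∈ Icc 0 T, ε * Real.exp (C * y) ≤ ε * Real.exp (C * T) := fun y hy ↦ by
    gcongr; exact hy.2
  have hψ₂T : ∀ p ∈ triangle T, |ψt₂ p.1 p.2| ≤ ε * Real.exp (C * T) := fun p hp ↦ by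
    linarith [hψ₂ p hp, hexp _ (fst_mem_Icc_of_mem_triangle hp)]
  refine ⟨fun y hy ↦ ?_, fun p hp ↦ ?_, fun p hp ↦ ?_⟩
  · nlinarith [hq y hy, hexp y hy, Real.exp_pos (C * T)]
  · nlinarith [hψ₂T p hp, Real.exp_pos (C * T)]
  · have hp₁ := fst_mem_Icc_of_mem_triangle hp
    calc |ψt₁ p.1 p.2| ≤ ε * Real.exp (C * T) * p.1 := (hineq₁ p hp).trans <|
          integral_abs_le_mul hp₁.1 fun η hη ↦
            hψ₂T _ (mk_add_sub_mem_triangle hp (Ioc_subset_Icc_self hη))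
      _ ≤ 6 * T * Real.exp (C * T) * ε := by
          nlinarith [hp₁.1, hp₁.2, mul_pos hε (Real.exp_pos (C * T))]

/-- stability estimates for the system in variations. -/
theorem stmt1
    (A T ε : ℝ) (hA : 0 < A) (hT : 0 < T) (hε : 0 < ε)
    (q : ℝ → ℝ) (ψ₁ : ℝ → ℝ → ℝ)
    (Δ : Set (ℝ × ℝ)) (hΔ : Δ = {p : ℝ × ℝ | 0 ≤ p.1 ∧ p.1 ≤ p.2 ∧ p.2 ≤ 2 * T - p.1})
    (hq : Continuous q) (hψ₁ : Continuous fun p : ℝ × ℝ => ψ₁ p.1 p.2)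
    (hqA : ∀ y ∈ Icc (0:ℝ) T, |q y| ≤ A)
    (hψ₁A : ∀ p ∈ Δ, |ψ₁ p.1 p.2| ≤ A)
    (ψt₁ ψt₂ : ℝ → ℝ → ℝ) (qt : ℝ → ℝ)
    (hψt₁ : Continuous fun p : ℝ × ℝ => ψt₁ p.1 p.2)
    (hψt₂ : Continuous fun p : ℝ × ℝ => ψt₂ p.1 p.2)
    (hqt : Continuous qt)
    (hineq₁ : ∀ p ∈ Δ, |ψt₁ p.1 p.2| ≤ ∫ η in (0:ℝ)..p.1, |ψt₂ η (p.2 + η - p.1)|)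
    (hineq₂ : ∀ p ∈ Δ, |ψt₂ p.1 p.2| ≤
      2 * A * (∫ η in (0:ℝ)..p.1, |ψt₁ η (p.2 - η + p.1)|)
        + A * (∫ η in (0:ℝ)..p.1, |qt η|) + ε)
    (hineq₃ : ∀ y ∈ Icc (0:ℝ) T, |qt y| ≤
      4 * A * (∫ η in (0:ℝ)..y, |qt η|)
        + 2 * A * (∫ η in (0:ℝ)..y, |ψt₁ η (2 * y - η)|) + 2 * ε) :
    (∀ y ∈ Icc (0:ℝ) T, |qt y| ≤ 6 * Real.exp (6 * A * max 1 (2 * T) * T) * ε) ∧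
    (∀ p ∈ Δ, |ψt₂ p.1 p.2| ≤ 6 * Real.exp (6 * A * max 1 (2 * T) * T) * ε) ∧
    (∀ p ∈ Δ, |ψt₁ p.1 p.2| ≤ 6 * T * Real.exp (6 * A * max 1 (2 * T) * T) * ε) :=
  stmt1_general A T ε hA hε Δ hΔ ψt₁ ψt₂ qt hψt₂ hqt hineq₁ hineq₂ hineq₃
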